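/- arXiv:2506.04665 — 7 statements merged into one kernel-verified Lean document; each statement's English description precedes it below -/
import Mathlib

section
/- Let U be a finite set with |U| = n ≥ 2, B > 0, and v : 2^U → ℝ≥0 monotone. For every vector d ∈ ℝ^U with d ≥ 0 and ∑_e d_e ≤ B, there exists a vector c ∈ ℝ^U with c ≥ 0 and ∑_e c_e ≤ B such that v({e ∈ U : c_e ≤ d_e}) ≤ max_{e ∈ U} v({e}). -/
theorem stmt_1 {U : Type*} [Fintype U] [DecidableEq U]
    (hn : 2 ≤ Fintype.card U)
    (B : ℝ) (hB : 0 < B)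
    (v : Finset U → ℝ)
    (hmono : ∀ S T : Finset U, S ⊆ T → v S ≤ v T)
    (hnorm : v ∅ = 0)
    (d : U → ℝ) (hd : ∀ e, 0 ≤ d e) (hdB : ∑ e, d e ≤ B) :
    ∃ c : U → ℝ, (∀ e, 0 ≤ c e) ∧ (∑ e, c e ≤ B) ∧
      v (Finset.univ.filter fun e => c e ≤ d e) ≤
        Finset.univ.sup'
          (Finset.univ_nonempty_iff.mpr
            (Fintype.card_pos_iff.mp (by omega)))
          (fun e => v {e}) := by
  classical
  have hne : (Finset.univ : Finset U).Nonempty :=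
    Finset.univ_nonempty_iff.mpr (Fintype.card_pos_iff.mp (by omega))
  obtain ⟨e0, -, hmax⟩ := Finset.exists_max_image Finset.univ d hne
  set n := Fintype.card U with hn'
  have hcast : (1 : ℝ) ≤ (n : ℝ) - 1 := by
    have : (2 : ℝ) ≤ (n : ℝ) := by exact_mod_cast hn
    linarith
  have hpos : (0 : ℝ) < (n : ℝ) - 1 := by linarith
  set X : ℝ := B - ∑ e, d e + d e0 with hX
  have hXpos : 0 < X := by
    by_contra h
    push_neg at h
    have h1 : d e0 ≤ ∑ e, d e - B := by rw [hX] at h; linarith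
    have h2 : d e0 ≤ 0 := by linarith
    have h3 : ∀ e, d e = 0 := fun e => le_antisymm (le_trans (hmax e (Finset.mem_univ e)) h2) (hd e)
    have h4 : ∑ e, d e = 0 := Finset.sum_eq_zero fun e _ => h3 e
    linarith [hX, h3 e0, h4]
  set δ : ℝ := X / ((n : ℝ) - 1) with hδ
  have hδpos : 0 < δ := div_pos hXpos hpos
  refine ⟨fun e => if e = e0 then 0 else d e + δ, ?_, ?_, ?_⟩
  · intro e
    by_cases h : e = e0 <;> simp [h]
    linarith [hd e, hδpos]
  · have hsum : ∑ e, (fun e => if e = e0 then 0 else d e + δ) e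
        = ∑ e ∈ Finset.univ.erase e0, (d e + δ) := by
      rw [← Finset.add_sum_erase _ _ (Finset.mem_univ e0), if_pos rfl, zero_add]
      exact Finset.sum_congr rfl fun e he => if_neg (Finset.ne_of_mem_erase he)
    rw [hsum, Finset.sum_add_distrib, Finset.sum_const, Finset.sum_erase_eq_sub (Finset.mem_univ e0)]
    have hcard : (Finset.univ.erase e0).card = n - 1 := by
      rw [Finset.card_erase_of_mem (Finset.mem_univ e0), Finset.card_univ]
    rw [hcard]
    have hcast2 : ((n - 1 : ℕ) : ℝ) = (n : ℝ) - 1 := by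
      have : 1 ≤ n := by omega
      push_cast [this]; ring
    rw [nsmul_eq_mul, hcast2]
    have : ((n : ℝ) - 1) * δ = X := by
      rw [hδ]; field_simp
    rw [this]; linarith [le_refl B]
  · have hfilter : (Finset.univ.filter fun e => (if e = e0 then 0 else d e + δ) ≤ d e) = {e0} := by
      ext e
      simp only [Finset.mem_filter, Finset.mem_univ, true_and, Finset.mem_singleton]
      constructor
      · intro h
        by_contra hne'
        rw [if_neg hne'] at h
        linarith
      · intro h
        simp only [h, if_pos rfl]
        exact hd e0
    rw [hfilter]
    exact Finset.le_sup' (fun e => v {e}) (Finset.mem_univ e0)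
end

section
/- Let K be a finite set and M ∈ ℝ^{K×K} with M[c,d] + M[d,c] ≥ 1 for all c, d ∈ K. Then there exists a probability vector x ∈ ℝ^K such that for every c ∈ K, ∑_{d ∈ K} M[c,d] x_d ≥ 1/2. -/
theorem stmt_3 {K : Type*} [Fintype K] [Nonempty K] (M : K → K → ℝ)
    (hsym : ∀ c d, 1 ≤ M c d + M d c) :
    ∃ x : K → ℝ, (∀ d, 0 ≤ x d) ∧ (∑ d, x d = 1) ∧
      ∀ c, 1 / 2 ≤ ∑ d, M c d * x d := by
  classical
  by_contra hcon
  push_neg at hcon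
  -- the linear map x ↦ M x
  set T : (K → ℝ) →ₗ[ℝ] (K → ℝ) :=
    { toFun := fun x c => ∑ d, M c d * x d
      map_add' := by
        intro x y; funext c
        simp [mul_add, Finset.sum_add_distrib]
      map_smul' := by
        intro r x; funext c
        simp [Finset.mul_sum, mul_left_comm] } with hT
  set A : Set (K → ℝ) := T '' stdSimplex ℝ K with hA
  set U : Set (K → ℝ) := {y | ∀ c, (1:ℝ)/2 ≤ y c} with hU
  have hAc : IsCompact A := (isCompact_stdSimplex ℝ K).image T.continuous_of_finiteDimensional
  have hAconv : Convex ℝ A := (convex_stdSimplex ℝ K).linear_image T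
  have hUconv : Convex ℝ U := by
    intro y hy z hz a b ha hb hab
    intro c
    have h1 := hy c
    have h2 := hz c
    simp only [Pi.add_apply, Pi.smul_apply, smul_eq_mul]
    nlinarith
  have hUclosed : IsClosed U := by
    have : U = ⋂ c, {y : K → ℝ | (1:ℝ)/2 ≤ y c} := by
      ext y; simp [hU, Set.mem_iInter]
    rw [this]
    exact isClosed_iInter fun c => isClosed_le continuous_const (continuous_apply c)
  have hdisj : Disjoint A U := by
    rw [Set.disjoint_left]
    rintro y ⟨x, hx, rfl⟩ hyU
    obtain ⟨c, hc⟩ := hcon x hx.1 hx.2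
    exact absurd (hyU c) (not_le.mpr hc)
  obtain ⟨f, u, v, hf1, huv, hf2⟩ :=
    geometric_hahn_banach_compact_closed hAconv hAc hUconv hUclosed hdisj
  set lam : K → ℝ := fun c => f (fun j => if c = j then (1:ℝ) else 0) with hlam
  have hf : ∀ y : K → ℝ, f y = ∑ c, y c * lam c := by
    intro y
    conv_lhs => rw [pi_eq_sum_univ y, map_sum]
    simp [hlam, smul_eq_mul]
  -- b₀ = constant 1/2 vector
  have hb0 : (fun _ : K => (1:ℝ)/2) ∈ U := fun c => le_refl _
  have hvb0 := hf2 _ hb0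
  -- lam is nonnegative
  have hlamnn : ∀ c, 0 ≤ lam c := by
    intro c
    by_contra hneg
    push_neg at hneg
    have hfb0v : v < f (fun _ : K => (1:ℝ)/2) := hvb0
    obtain ⟨t, htnn, hteq⟩ : ∃ t : ℝ, 0 ≤ t ∧
        t * lam c = v - 1 - f (fun _ : K => (1:ℝ)/2) := by
      refine ⟨(v - 1 - f (fun _ : K => (1:ℝ)/2)) / lam c, ?_, ?_⟩
      · rw [div_nonneg_iff]
        right
        constructor <;> linarith
      · rw [div_mul_cancel₀ _ (ne_of_lt hneg)]
    have hmem : ((fun _ : K => (1:ℝ)/2) + t • fun j => if c = j then (1:ℝ) else 0) ∈ U := by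
      intro j
      simp only [Pi.add_apply, Pi.smul_apply, smul_eq_mul]
      by_cases h : c = j <;> simp [h] <;> nlinarith
    have hv2 := hf2 _ hmem
    rw [map_add, map_smul] at hv2
    simp only [smul_eq_mul] at hv2
    have he : (f fun j => if c = j then (1:ℝ) else 0) = lam c := rfl
    rw [he, hteq] at hv2
    linarith
  set s : ℝ := ∑ c, lam c with hs
  have hsnn : 0 ≤ s := Finset.sum_nonneg fun c _ => hlamnn c
  have hspos : 0 < s := by
    rcases lt_or_eq_of_le hsnn with h | h
    · exact h
    · exfalso
      have hz : ∀ c, lam c = 0 := by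
        intro c
        have := (Finset.sum_eq_zero_iff_of_nonneg (fun c _ => hlamnn c)).mp h.symm
        exact this c (Finset.mem_univ c)
      -- A is nonempty
      have hcard : (0:ℝ) < Fintype.card K := by
        exact_mod_cast Fintype.card_pos
      have hx0 : (fun _ : K => (Fintype.card K : ℝ)⁻¹) ∈ stdSimplex ℝ K := by
        constructor
        · intro i; positivity
        · rw [Finset.sum_const, Finset.card_univ, nsmul_eq_mul, mul_inv_cancel₀ hcard.ne']
      have ha := hf1 _ ⟨_, hx0, rfl⟩
      rw [hf] at ha
      simp [hz] at ha
      rw [hf] at hvb0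
      simp [hz] at hvb0
      linarith
  set μ : K → ℝ := fun c => lam c / s with hμ
  have hμnn : ∀ c, 0 ≤ μ c := fun c => div_nonneg (hlamnn c) hsnn
  have hμsum : ∑ c, μ c = 1 := by
    simp only [hμ, div_eq_mul_inv, ← Finset.sum_mul]
    rw [← hs, mul_inv_cancel₀ (ne_of_gt hspos)]
  have hμΔ : μ ∈ stdSimplex ℝ K := ⟨hμnn, hμsum⟩
  set Q : ℝ := ∑ c, ∑ d, μ c * (M c d * μ d) with hQ
  -- lower bound on Q
  have hQge : (1:ℝ)/2 ≤ Q := by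
    have key : ∑ c, ∑ d, μ c * μ d ≤ ∑ c, ∑ d, μ c * μ d * (M c d + M d c) := by
      refine Finset.sum_le_sum fun c _ => Finset.sum_le_sum fun d _ => ?_
      have h1 := hsym c d
      have h2 : 0 ≤ μ c * μ d := mul_nonneg (hμnn c) (hμnn d)
      nlinarith
    have hlhs : ∑ c, ∑ d, μ c * μ d = 1 := by
      rw [← Finset.sum_mul_sum, hμsum, one_mul]
    have hrhs : ∑ c, ∑ d, μ c * μ d * (M c d + M d c) = 2 * Q := by
      have e1 : ∀ c d, μ c * μ d * (M c d + M d c)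
          = μ c * (M c d * μ d) + μ d * (M d c * μ c) := by intro c d; ring
      simp only [e1, Finset.sum_add_distrib]
      have e2 : ∑ c, ∑ d, μ d * (M d c * μ c) = ∑ c, ∑ d, μ c * (M c d * μ d) := by
        rw [Finset.sum_comm]
      rw [e2, ← hQ]; ring
    rw [hlhs] at key
    rw [hrhs] at key
    linarith
  -- upper bound on Q
  have haA : T μ ∈ A := ⟨μ, hμΔ, rfl⟩
  have h1 := hf1 _ haA
  rw [hf] at h1
  have hlameq : ∀ c, lam c = s * μ c := by
    intro c; rw [hμ]; field_simp
  have hTval : ∑ c, (T μ) c * lam c = s * Q := by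
    simp only [hT, LinearMap.coe_mk, AddHom.coe_mk, hQ, Finset.mul_sum]
    refine Finset.sum_congr rfl fun c _ => ?_
    rw [hlameq c, Finset.sum_mul]
    exact Finset.sum_congr rfl fun d _ => by ring
  rw [hTval] at h1
  rw [hf] at hvb0
  have hfb0 : ∑ c, (1:ℝ)/2 * lam c = s / 2 := by
    rw [← Finset.mul_sum, ← hs]; ring
  rw [hfb0] at hvb0
  -- s * Q < u < v < s / 2, so Q < 1/2, contradiction
  nlinarith
end

section
/- Let U be a finite set, v : 2^U → ℝ≥0 a subadditive valuation, and K a finite set of vectors in ℝ^U with v(U) > 0. Then there exists a probability distribution D over K (i.e., weights x_d ≥ 0 summing to 1) such that for every c ∈ K, ∑_{d ∈ K} x_d · v({e ∈ U : c_e ≤ d_e}) ≥ v(U)/2. -/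
theorem aux_game_4 {ι : Type*} [Fintype ι] [Nonempty ι] [DecidableEq ι]
    (B : Matrix ι ι ℝ) (hB : ∀ c d, 0 ≤ B c d + B d c) :
    ∃ x : ι → ℝ, (∀ c, 0 ≤ x c) ∧ (∑ c, x c = 1) ∧ ∀ c, 0 ≤ ∑ d, B c d * x d := by
  by_contra hcon
  push_neg at hcon
  set C : Set (ι → ℝ) := B.mulVecLin '' stdSimplex ℝ ι with hC
  set P : Set (ι → ℝ) := Set.pi Set.univ fun _ => Set.Ici (0:ℝ) with hP
  have hmemP : ∀ w : ι → ℝ, w ∈ P ↔ ∀ c, 0 ≤ w c := by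
    intro w
    constructor
    · intro h c; exact h c (Set.mem_univ c)
    · intro h c _; exact h c
  have hCc : IsCompact C :=
    (isCompact_stdSimplex ℝ ι).image B.mulVecLin.continuous_of_finiteDimensional
  have hCv : Convex ℝ C := (convex_stdSimplex ℝ ι).linear_image B.mulVecLin
  have hPc : IsClosed P := isClosed_set_pi fun i _ => isClosed_Ici
  have hPv : Convex ℝ P := convex_pi fun i _ => convex_Ici 0
  have hmul : ∀ (x : ι → ℝ) (c : ι), B.mulVecLin x c = ∑ d, B c d * x d := by
    intro x c
    simp [Matrix.mulVecLin, Matrix.mulVec, dotProduct]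
  have hdisj : Disjoint C P := by
    rw [Set.disjoint_left]
    rintro w ⟨x, hx, rfl⟩ hwP
    obtain ⟨c, hc⟩ := hcon x hx.1 hx.2
    have := (hmemP _).1 hwP c
    rw [hmul] at this
    linarith
  obtain ⟨f, u, vv, hfC, huv, hfP⟩ :=
    geometric_hahn_banach_compact_closed hCv hCc hPv hPc hdisj
  set y : ι → ℝ := fun c => f (Pi.single c (1:ℝ)) with hy
  have hvv0 : vv < 0 := by
    have := hfP 0 ((hmemP 0).2 fun c => le_refl 0)
    simpa using this
  have hyrep : ∀ z : ι → ℝ, f z = ∑ c, z c * y c := by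
    intro z
    have hz : z = ∑ c, z c • (Pi.single c 1 : ι → ℝ) := by
      ext j
      simp [Finset.sum_apply, Pi.single_apply]
    conv_lhs => rw [hz]
    rw [map_sum]
    simp [hy, smul_eq_mul]
  have hy0 : ∀ c, 0 ≤ y c := by
    intro c
    by_contra hneg
    push_neg at hneg
    set t : ℝ := vv / y c with ht
    have ht0 : 0 ≤ t := by rw [ht, div_nonneg_iff]; exact Or.inr ⟨hvv0.le, hneg.le⟩
    have hmem : (t • (Pi.single c 1 : ι → ℝ)) ∈ P := by
      refine (hmemP _).2 fun i => ?_
      rcases eq_or_ne i c with h | h <;> simp [Pi.single_apply, h, ht0]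
    have := hfP _ hmem
    rw [map_smul] at this
    have : vv < t * y c := this
    rw [ht, div_mul_cancel₀ _ (ne_of_lt hneg)] at this
    exact lt_irrefl _ this
  have hCneg : ∀ a ∈ C, f a < 0 := fun a ha => lt_trans (lt_trans (hfC a ha) huv) hvv0
  have hs : 0 < ∑ c, y c := by
    rcases (Finset.sum_nonneg fun c _ => hy0 c).lt_or_eq with h | h
    · exact h
    · exfalso
      have hall : ∀ c ∈ Finset.univ, y c = 0 :=
        (Finset.sum_eq_zero_iff_of_nonneg fun c _ => hy0 c).1 h.symm
      have hx0 : (fun _ : ι => (Fintype.card ι : ℝ)⁻¹) ∈ stdSimplex ℝ ι := by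
        constructor
        · intro i; positivity
        · have : (0:ℝ) < Fintype.card ι := by
            exact_mod_cast Fintype.card_pos
          field_simp
          rw [Finset.sum_const, Finset.card_univ, nsmul_eq_mul]
          exact mul_one_div_cancel this.ne'
      have := hCneg _ ⟨_, hx0, rfl⟩
      rw [hyrep] at this
      simp only [hall _ (Finset.mem_univ _), mul_zero, Finset.sum_const_zero] at this
      exact lt_irrefl _ this
  set x : ι → ℝ := fun c => y c / (∑ c, y c) with hxdef
  have hxsimp : x ∈ stdSimplex ℝ ι := by
    constructor
    · intro c; exact div_nonneg (hy0 c) hs.le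
    · rw [← Finset.sum_div]
      field_simp
  have hQ : 0 ≤ ∑ c, ∑ d, y c * B c d * y d := by
    have hswap : (∑ c, ∑ d, y c * B c d * y d) = ∑ c, ∑ d, y d * B d c * y c :=
      Finset.sum_comm
    have h2 : (∑ c, ∑ d, y c * B c d * y d) + (∑ c, ∑ d, y c * B c d * y d)
        = ∑ c, ∑ d, (y c * y d) * (B c d + B d c) := by
      nth_rewrite 2 [hswap]
      rw [← Finset.sum_add_distrib]
      refine Finset.sum_congr rfl fun c _ => ?_
      rw [← Finset.sum_add_distrib]
      exact Finset.sum_congr rfl fun d _ => by ring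
    have hnn : 0 ≤ ∑ c, ∑ d, (y c * y d) * (B c d + B d c) :=
      Finset.sum_nonneg fun c _ => Finset.sum_nonneg fun d _ =>
        mul_nonneg (mul_nonneg (hy0 c) (hy0 d)) (hB c d)
    linarith
  have hval : f (B.mulVecLin x) = (∑ c, y c)⁻¹ * ∑ c, ∑ d, y c * B c d * y d := by
    rw [hyrep, Finset.mul_sum]
    refine Finset.sum_congr rfl fun c _ => ?_
    rw [hmul, Finset.sum_mul, Finset.mul_sum]
    refine Finset.sum_congr rfl fun d _ => ?_
    rw [hxdef]
    field_simp
  have hneg := hCneg _ ⟨x, hxsimp, rfl⟩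
  rw [hval] at hneg
  have : 0 ≤ (∑ c, y c)⁻¹ * ∑ c, ∑ d, y c * B c d * y d :=
    mul_nonneg (inv_nonneg.2 hs.le) hQ
  linarith

theorem stmt_4 {U : Type*} [Fintype U] [DecidableEq U] (v : Finset U → ℝ)
    (hpos : ∀ T : Finset U, 0 ≤ v T)
    (hsub : ∀ S T : Finset U, v (S ∪ T) ≤ v S + v T)
    (K : Finset (U → ℝ)) (hK : K.Nonempty)
    (hv : 0 < v Finset.univ) :
    ∃ x : (U → ℝ) → ℝ, (∀ d ∈ K, 0 ≤ x d) ∧ (∑ d ∈ K, x d = 1) ∧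
      ∀ c ∈ K,
        v Finset.univ / 2 ≤
          ∑ d ∈ K, x d * v (Finset.univ.filter fun e => c e ≤ d e) := by
  haveI : Nonempty {d // d ∈ K} := Finset.nonempty_coe_sort.2 hK
  set B : Matrix {d // d ∈ K} {d // d ∈ K} ℝ := fun c d =>
    v (Finset.univ.filter fun e => (c : U → ℝ) e ≤ (d : U → ℝ) e) - v Finset.univ / 2
    with hBdef
  have hB : ∀ c d, 0 ≤ B c d + B d c := by
    intro c d
    have huniv : (Finset.univ.filter fun e => (c : U → ℝ) e ≤ (d : U → ℝ) e) ∪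
        (Finset.univ.filter fun e => (d : U → ℝ) e ≤ (c : U → ℝ) e) = Finset.univ := by
      ext e
      simp [le_total ((c : U → ℝ) e) ((d : U → ℝ) e)]
    have := hsub (Finset.univ.filter fun e => (c : U → ℝ) e ≤ (d : U → ℝ) e)
      (Finset.univ.filter fun e => (d : U → ℝ) e ≤ (c : U → ℝ) e)
    rw [huniv] at this
    simp only [hBdef]
    linarith
  obtain ⟨x, hx0, hx1, hxB⟩ := aux_game_4 B hB
  refine ⟨fun d => if h : d ∈ K then x ⟨d, h⟩ else 0, ?_, ?_, ?_⟩
  · intro d hd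
    have := hx0 ⟨d, hd⟩
    simpa [hd] using this
  · rw [← Finset.sum_attach K (fun d => if h : d ∈ K then x ⟨d, h⟩ else 0)]
    rw [← hx1, Finset.univ_eq_attach]
    exact Finset.sum_congr rfl fun d _ => by rw [dif_pos d.2]
  · intro c hc
    have key := hxB ⟨c, hc⟩
    have huea : (Finset.univ : Finset {d // d ∈ K}) = K.attach := Finset.univ_eq_attach K
    rw [huea] at key hx1
    rw [← Finset.sum_attach K (fun d => (if h : d ∈ K then x ⟨d, h⟩ else 0) *
      v (Finset.univ.filter fun e => c e ≤ d e))]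
    have hstep : (∑ d ∈ K.attach, (if h : (d : U → ℝ) ∈ K then x ⟨d, h⟩ else 0) *
        v (Finset.univ.filter fun e => c e ≤ (d : U → ℝ) e))
        = (∑ d ∈ K.attach, B ⟨c, hc⟩ d * x d) + (∑ d ∈ K.attach, x d) * (v Finset.univ / 2) := by
      rw [Finset.sum_mul, ← Finset.sum_add_distrib]
      refine Finset.sum_congr rfl fun d _ => ?_
      rw [dif_pos d.2]
      simp only [hBdef, Subtype.coe_eta]
      ring
    rw [hstep, hx1, one_mul]
    linarith
end

section
/- Let U be a finite set, v : 2^U → ℝ subadditive and monotone with v(∅)=0. Fix S ⊆ U, B > 0, κ ∈ (0,1), and suppose p : S → ℝ≥0 with p(S) > 0 and μ ≥ 0 satisfy p(T) + μ ≥ v(T) for all T ⊆ S. Define d_e = p_e · B / p(S) for e ∈ S. Then for every c : S → ℝ≥0 with c(S) ≤ κB, we have v({e ∈ S : c_e ≤ d_e}) ≥ v(S) − (κ·p(S) + μ). -/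
theorem stmt_5 {U : Type*} [Fintype U] [DecidableEq U] (v : Finset U → ℝ)
    (hsub : ∀ A C : Finset U, v (A ∪ C) ≤ v A + v C)
    (hmono : ∀ A C : Finset U, A ⊆ C → v A ≤ v C)
    (hnorm : v ∅ = 0)
    (S : Finset U) (B : ℝ) (hB : 0 < B) (κ : ℝ) (hκ : κ ∈ Set.Ioo (0:ℝ) 1)
    (p : U → ℝ) (hp : ∀ e, 0 ≤ p e) (hpS : 0 < ∑ e ∈ S, p e)
    (μ : ℝ) (hμ : 0 ≤ μ)
    (hfeas : ∀ T ⊆ S, v T ≤ (∑ e ∈ T, p e) + μ)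
    (c : U → ℝ) (hc : ∀ e, 0 ≤ c e) (hcS : ∑ e ∈ S, c e ≤ κ * B) :
    v S - (κ * (∑ e ∈ S, p e) + μ) ≤
      v (S.filter fun e => c e ≤ p e * B / ∑ e' ∈ S, p e') := by
  set P := ∑ e ∈ S, p e with hP
  set A := S.filter fun e => c e ≤ p e * B / P with hA
  set T := S.filter fun e => ¬ c e ≤ p e * B / P with hT
  have hunion : S = A ∪ T := by
    ext e; simp only [hA, hT, Finset.mem_union, Finset.mem_filter]; tauto
  have h1 : v S ≤ v A + v T := by rw [hunion]; exact hsub A T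
  have hTS : T ⊆ S := Finset.filter_subset _ _
  have h2 : v T ≤ (∑ e ∈ T, p e) + μ := hfeas T hTS
  have h3 : ∑ e ∈ T, p e ≤ κ * P := by
    have hstep : ∀ e ∈ T, p e ≤ c e * (P / B) := by
      intro e he
      rw [hT, Finset.mem_filter] at he
      have h := not_le.mp he.2
      rw [div_lt_iff₀ hpS] at h
      rw [mul_div_assoc'] at *
      rw [le_div_iff₀ hB]
      nlinarith
    have := Finset.sum_le_sum hstep
    rw [← Finset.sum_mul] at this
    have h4 : ∑ e ∈ T, c e ≤ κ * B :=
      le_trans (Finset.sum_le_sum_of_subset_of_nonneg hTS (fun i _ _ => hc i)) hcS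
    have h5 : (∑ e ∈ T, c e) * (P / B) ≤ κ * B * (P / B) :=
      mul_le_mul_of_nonneg_right h4 (by positivity)
    have h6 : κ * B * (P / B) = κ * P := by field_simp
    linarith
  linarith
end

section
/- Let U be a finite set, v : 2^U → ℝ≥0 subadditive with v(∅) = 0, c : U → ℝ≥0 costs, B ≥ 0, and OPT = max{v(S) : S ⊆ U, c(S) ≤ B}. Partition U randomly into U₁, U₂ by placing each element independently with probability 1/2 into U₁. Let V_i* = max{v(S) : S ⊆ U_i, c(S) ≤ B} and e* ∈ argmax_e v({e}) (with every singleton cost at most B). Then Pr[V₂* ≥ OPT/2 and V₂* ≥ V₁* ≥ (OPT − v(e*))/4] ≥ 1/4. -/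
/-- The optimal value `max {v(S) : S ⊆ W, c(S) ≤ B}` of the knapsack problem
restricted to ground set `W`. -/
noncomputable def knapOpt {U : Type*} [DecidableEq U]
    (v : Finset U → ℝ) (c : U → ℝ) (B : ℝ) (hB : 0 ≤ B) (W : Finset U) : ℝ :=
  (W.powerset.filter fun S => ∑ e ∈ S, c e ≤ B).sup'
    ⟨∅, by simp [hB]⟩ v

lemma le_knapOpt {U : Type*} [DecidableEq U]
    (v : Finset U → ℝ) (c : U → ℝ) (B : ℝ) (hB : 0 ≤ B)
    {W T : Finset U} (hTW : T ⊆ W) (hTc : ∑ e ∈ T, c e ≤ B) :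
    v T ≤ knapOpt v c B hB W :=
  Finset.le_sup' v (by simp [Finset.mem_filter, Finset.mem_powerset, hTW, hTc])

lemma knapOpt_exists {U : Type*} [DecidableEq U]
    (v : Finset U → ℝ) (c : U → ℝ) (B : ℝ) (hB : 0 ≤ B) (W : Finset U) :
    ∃ S, S ⊆ W ∧ ∑ e ∈ S, c e ≤ B ∧ knapOpt v c B hB W = v S := by
  obtain ⟨S, hS, h⟩ := Finset.exists_mem_eq_sup'
    (⟨∅, by simp [hB]⟩ : (W.powerset.filter fun S => ∑ e ∈ S, c e ≤ B).Nonempty) v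
  rw [Finset.mem_filter, Finset.mem_powerset] at hS
  exact ⟨S, hS.1, hS.2, h⟩

lemma bool_xor_iff : ∀ x y z : Bool, (xor y x = z) ↔ (x = xor y z) := by decide

lemma bool_xor_inj : ∀ y x x' : Bool, xor y x = xor y x' → x = x' := by decide

set_option maxHeartbeats 1000000 in
theorem stmt_11 {U : Type*} [Fintype U] [DecidableEq U]
    (v : Finset U → ℝ)
    (hpos : ∀ T : Finset U, 0 ≤ v T)
    (hsub : ∀ A C : Finset U, v (A ∪ C) ≤ v A + v C)
    (hnorm : v ∅ = 0)
    (c : U → ℝ) (hc : ∀ e, 0 ≤ c e)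
    (B : ℝ) (hB : 0 ≤ B) (hcB : ∀ e, c e ≤ B)
    (estar : U) (hestar : ∀ e : U, v {e} ≤ v {estar}) :
    (1 : ℝ) / 4 ≤
      ((Finset.univ.filter fun σ : U → Bool =>
          let V₁ := knapOpt v c B hB (Finset.univ.filter fun e => σ e = true)
          let V₂ := knapOpt v c B hB (Finset.univ.filter fun e => σ e = false)
          let OPT := knapOpt v c B hB Finset.univ
          OPT / 2 ≤ V₂ ∧ V₁ ≤ V₂ ∧ (OPT - v {estar}) / 4 ≤ V₁).card : ℝ) /
        (2 ^ Fintype.card U : ℝ) := by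
  classical
  set n := Fintype.card U with hn
  set V₁ : (U → Bool) → ℝ :=
    fun σ => knapOpt v c B hB (Finset.univ.filter fun e => σ e = true) with hV₁
  set V₂ : (U → Bool) → ℝ :=
    fun σ => knapOpt v c B hB (Finset.univ.filter fun e => σ e = false) with hV₂
  set OPT : ℝ := knapOpt v c B hB Finset.univ with hOPTdef
  set θ : ℝ := (OPT - v {estar}) / 4 with hθdef
  set G : Finset (U → Bool) := (Finset.univ.filter fun σ : U → Bool =>
          let V₁ := knapOpt v c B hB (Finset.univ.filter fun e => σ e = true)
          let V₂ := knapOpt v c B hB (Finset.univ.filter fun e => σ e = false)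
          let OPT := knapOpt v c B hB Finset.univ
          OPT / 2 ≤ V₂ ∧ V₁ ≤ V₂ ∧ (OPT - v {estar}) / 4 ≤ V₁) with hGdef
  have hGmem : ∀ σ : U → Bool,
      σ ∈ G ↔ (OPT / 2 ≤ V₂ σ ∧ V₁ σ ≤ V₂ σ ∧ θ ≤ V₁ σ) := by
    intro σ
    rw [hGdef, Finset.mem_filter]
    exact ⟨fun h => h.2, fun h => ⟨Finset.mem_univ σ, h⟩⟩
  have hcardfun : (Finset.univ : Finset (U → Bool)).card = 2 ^ n := by
    rw [Finset.card_univ, Fintype.card_fun, Fintype.card_bool]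
  -- basic facts
  have hVnonneg : ∀ W : Finset U, (0:ℝ) ≤ knapOpt v c B hB W := by
    intro W
    have := le_knapOpt v c B hB (W := W) (T := ∅) (Finset.empty_subset _) (by simp [hB])
    rwa [hnorm] at this
  have hOPTnonneg : (0:ℝ) ≤ OPT := hVnonneg _
  obtain ⟨Sstar, hSsub, hSc, hSv⟩ := knapOpt_exists v c B hB Finset.univ
  rw [← hOPTdef] at hSv
  have hfeas : ∀ T : Finset U, T ⊆ Sstar → ∑ e ∈ T, c e ≤ B := by
    intro T hT
    exact le_trans (Finset.sum_le_sum_of_subset_of_nonneg hT fun i _ _ => hc i) hSc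
  -- splitting along a random partition
  have hsplitv : ∀ (T : Finset U) (σ : U → Bool) (b : Bool),
      v T ≤ v (T.filter fun e => σ e = b) + v (T.filter fun e => σ e = !b) := by
    intro T σ b
    have hU : T = (T.filter fun e => σ e = b) ∪ (T.filter fun e => σ e = !b) := by
      ext e
      simp only [Finset.mem_union, Finset.mem_filter]
      constructor
      · intro h
        rcases (by decide : ∀ x y : Bool, x = y ∨ x = !y) (σ e) b with h' | h'
        · exact Or.inl ⟨h, h'⟩
        · exact Or.inr ⟨h, h'⟩
      · rintro (⟨h, _⟩ | ⟨h, _⟩) <;> exact h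
    calc v T = v ((T.filter fun e => σ e = b) ∪ (T.filter fun e => σ e = !b)) := by rw [← hU]
      _ ≤ _ := hsub _ _
  have hfilter_le : ∀ (T : Finset U) (σ : U → Bool) (b : Bool), T ⊆ Sstar →
      v (T.filter fun e => σ e = b) ≤ knapOpt v c B hB (Finset.univ.filter fun e => σ e = b) := by
    intro T σ b hT
    apply le_knapOpt
    · intro e he
      rw [Finset.mem_filter] at he ⊢
      exact ⟨Finset.mem_univ e, he.2⟩
    · exact hfeas _ ((Finset.filter_subset _ _).trans hT)
  have hOPT_le : ∀ σ : U → Bool, OPT ≤ V₁ σ + V₂ σ := by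
    intro σ
    have h1 := hfilter_le Sstar σ true (Finset.Subset.refl _)
    have h2 := hfilter_le Sstar σ false (Finset.Subset.refl _)
    have h3 := hsplitv Sstar σ true
    simp only [Bool.not_true] at h3
    rw [hSv]
    calc v Sstar ≤ _ := h3
      _ ≤ V₁ σ + V₂ σ := add_le_add h1 h2
  -- the symmetric event A
  set A : Finset (U → Bool) :=
    Finset.univ.filter (fun σ => θ ≤ V₁ σ ∧ θ ≤ V₂ σ) with hAdef
  have hmemA : ∀ σ, σ ∈ A ↔ (θ ≤ V₁ σ ∧ θ ≤ V₂ σ) := by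
    intro σ
    rw [hAdef, Finset.mem_filter]
    exact ⟨fun h => h.2, fun h => ⟨Finset.mem_univ σ, h⟩⟩
  -- Step 1: 2^n ≤ 2 * A.card
  have hstep1 : 2 ^ n ≤ 2 * A.card := by
    by_cases hθ0 : OPT - v {estar} ≤ 0
    · have hθneg : θ ≤ 0 := by rw [hθdef]; linarith
      have hAuniv : A = Finset.univ := by
        apply Finset.filter_true_of_mem
        intro σ _
        exact ⟨le_trans hθneg (hVnonneg _), le_trans hθneg (hVnonneg _)⟩
      rw [hAuniv, hcardfun]
      exact Nat.le_mul_of_pos_left _ (by norm_num)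
    · push_neg at hθ0
      have hθpos : 0 < θ := by rw [hθdef]; linarith
      have h2θ : (OPT - v {estar}) / 2 = 2 * θ := by rw [hθdef]; ring
      -- find a minimal subset T₁ of Sstar with v T₁ ≥ 2θ
      have hFne : Sstar ∈ Sstar.powerset.filter (fun T => 2 * θ ≤ v T) := by
        rw [Finset.mem_filter, Finset.mem_powerset]
        refine ⟨le_refl _, ?_⟩
        have h0 : 0 ≤ v {estar} := hpos _
        rw [← hSv] at *
        linarith
      obtain ⟨T₁, hT₁F, hmin⟩ :=
        Finset.exists_min_image (Sstar.powerset.filter (fun T => 2 * θ ≤ v T))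
          Finset.card ⟨Sstar, hFne⟩
      rw [Finset.mem_filter, Finset.mem_powerset] at hT₁F
      obtain ⟨hT₁sub, hT₁v⟩ := hT₁F
      have hT₁ne : T₁.Nonempty := by
        rw [Finset.nonempty_iff_ne_empty]
        intro h
        rw [h, hnorm] at hT₁v
        linarith
      obtain ⟨e₀, he₀⟩ := hT₁ne
      have herase : v (T₁.erase e₀) < 2 * θ := by
        by_contra h
        push_neg at h
        have hmem : T₁.erase e₀ ∈ Sstar.powerset.filter (fun T => 2 * θ ≤ v T) := by
          rw [Finset.mem_filter, Finset.mem_powerset]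
          exact ⟨(Finset.erase_subset _ _).trans hT₁sub, h⟩
        have h1 := hmin _ hmem
        have h2 := Finset.card_erase_lt_of_mem he₀
        omega
      have hvT₁_ub : v T₁ ≤ 2 * θ + v {estar} := by
        have hU : T₁ = T₁.erase e₀ ∪ {e₀} := by
          rw [Finset.union_comm, ← Finset.insert_eq, Finset.insert_erase he₀]
        have hle : v T₁ ≤ v (T₁.erase e₀) + v {e₀} := by
          calc v T₁ = v (T₁.erase e₀ ∪ {e₀}) := by rw [← hU]
            _ ≤ _ := hsub _ _
        have he := hestar e₀
        linarith
      set T₂ : Finset U := Sstar \ T₁ with hT₂def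
      have hT₂sub : T₂ ⊆ Sstar := Finset.sdiff_subset
      have hvT₂ : 2 * θ ≤ v T₂ := by
        have hU : Sstar = T₁ ∪ T₂ := (Finset.union_sdiff_of_subset hT₁sub).symm
        have h1 : v Sstar ≤ v T₁ + v T₂ := by
          calc v Sstar = v (T₁ ∪ T₂) := by rw [← hU]
            _ ≤ _ := hsub _ _
        rw [← hSv] at h1
        have h3 : θ = (OPT - v {estar}) / 4 := hθdef
        linarith
      have hnotinT₁ : ∀ e ∈ T₂, e ∉ T₁ := fun e he => (Finset.mem_sdiff.mp he).2
      -- bad events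
      set Bad : Bool → Finset (U → Bool) := fun b =>
        Finset.univ.filter (fun σ =>
          v (T₁.filter fun e => σ e = b) < θ ∧ v (T₂.filter fun e => σ e = b) < θ) with hBaddef
      -- each bad event has cardinality at most 2^n / 4
      have hBadcard : ∀ b : Bool, 4 * (Bad b).card ≤ 2 ^ n := by
        intro b
        set flip : (U → Bool) → Bool → Bool → (U → Bool) := fun σ b₁ b₂ e =>
          if e ∈ T₁ then xor b₁ (σ e) else if e ∈ T₂ then xor b₂ (σ e) else σ e with hflip
        have hfT₁ : ∀ σ b₁ b₂, (T₁.filter fun e => flip σ b₁ b₂ e = b)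
            = T₁.filter fun e => σ e = xor b₁ b := by
          intro σ b₁ b₂
          apply Finset.filter_congr
          intro e he
          simp only [hflip]
          rw [if_pos he]
          exact bool_xor_iff (σ e) b₁ b
        have hfT₂ : ∀ σ b₁ b₂, (T₂.filter fun e => flip σ b₁ b₂ e = b)
            = T₂.filter fun e => σ e = xor b₂ b := by
          intro σ b₁ b₂
          apply Finset.filter_congr
          intro e he
          simp only [hflip]
          rw [if_neg (hnotinT₁ e he), if_pos he]
          exact bool_xor_iff (σ e) b₂ b
        -- for σ ∈ Bad b, the value on the flipped side is big
        have hbig : ∀ (T : Finset U), 2 * θ ≤ v T → ∀ σ : U → Bool,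
            v (T.filter fun e => σ e = b) < θ → ¬ (v (T.filter fun e => σ e = !b) < θ) := by
          intro T hT σ hlt hlt'
          have := hsplitv T σ b
          linarith
        have hmemBad : ∀ σ ∈ Bad b,
            v (T₁.filter fun e => σ e = b) < θ ∧ v (T₂.filter fun e => σ e = b) < θ := by
          intro σ hσ
          rw [hBaddef, Finset.mem_filter] at hσ
          exact hσ.2
        -- decoding the flip bits from the image
        have hdecode : ∀ σ ∈ Bad b, ∀ b₁ b₂ : Bool,
            ((v (T₁.filter fun e => flip σ b₁ b₂ e = b) < θ) ↔ b₁ = false) ∧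
            ((v (T₂.filter fun e => flip σ b₁ b₂ e = b) < θ) ↔ b₂ = false) := by
          intro σ hσ b₁ b₂
          obtain ⟨h1, h2⟩ := hmemBad σ hσ
          constructor
          · rw [hfT₁]
            cases b₁
            · simpa using h1
            · simp only [Bool.true_xor]
              exact ⟨fun h => absurd h (hbig T₁ hT₁v σ h1), fun h => absurd h (by decide)⟩
          · rw [hfT₂]
            cases b₂
            · simpa using h2
            · simp only [Bool.true_xor]
              exact ⟨fun h => absurd h (hbig T₂ hvT₂ σ h2), fun h => absurd h (by decide)⟩
        have hinj : Set.InjOn (fun p : (U → Bool) × (Bool × Bool) => flip p.1 p.2.1 p.2.2)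
            ↑((Bad b) ×ˢ (Finset.univ : Finset (Bool × Bool))) := by
          rintro ⟨σ, b₁, b₂⟩ hp ⟨σ', b₁', b₂'⟩ hp' heq
          simp only [Finset.coe_product, Set.mem_prod, Finset.mem_coe] at hp hp'
          have hσB : σ ∈ Bad b := hp.1
          have hσ'B : σ' ∈ Bad b := hp'.1
          have heq2 : flip σ b₁ b₂ = flip σ' b₁' b₂' := heq
          have hiff1 : (b₁ = false) ↔ (b₁' = false) := by
            have d1 := (hdecode σ hσB b₁ b₂).1
            have d2 := (hdecode σ' hσ'B b₁' b₂').1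
            rw [heq2] at d1
            exact d1.symm.trans d2
          have hiff2 : (b₂ = false) ↔ (b₂' = false) := by
            have d1 := (hdecode σ hσB b₁ b₂).2
            have d2 := (hdecode σ' hσ'B b₁' b₂').2
            rw [heq2] at d1
            exact d1.symm.trans d2
          have hb₁ : b₁ = b₁' := by
            cases b₁ <;> cases b₁'
            · rfl
            · exact absurd (hiff1.mp rfl) (by decide)
            · exact absurd (hiff1.mpr rfl) (by decide)
            · rfl
          have hb₂ : b₂ = b₂' := by
            cases b₂ <;> cases b₂'
            · rfl
            · exact absurd (hiff2.mp rfl) (by decide)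
            · exact absurd (hiff2.mpr rfl) (by decide)
            · rfl
          subst hb₁; subst hb₂
          have hσσ' : σ = σ' := by
            funext e
            have he := congrFun heq2 e
            simp only [hflip] at he
            by_cases h1 : e ∈ T₁
            · rw [if_pos h1, if_pos h1] at he
              exact bool_xor_inj _ _ _ he
            · rw [if_neg h1, if_neg h1] at he
              by_cases h2 : e ∈ T₂
              · rw [if_pos h2, if_pos h2] at he
                exact bool_xor_inj _ _ _ he
              · rw [if_neg h2, if_neg h2] at he
                exact he
          rw [hσσ']
        have hle := Finset.card_le_card_of_injOn _
          (fun p _ => Finset.mem_univ (flip p.1 p.2.1 p.2.2)) hinj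
        rw [Finset.card_product, hcardfun] at hle
        have h4 : (Finset.univ : Finset (Bool × Bool)).card = 4 := by decide
        rw [h4, Nat.mul_comm] at hle
        exact hle
      -- cover: every σ outside A is in a bad event
      have hcover : (Finset.univ : Finset (U → Bool)) ⊆ A ∪ Bad true ∪ Bad false := by
        intro σ _
        by_cases hA : σ ∈ A
        · exact Finset.mem_union_left _ (Finset.mem_union_left _ hA)
        · rw [hmemA] at hA
          push_neg at hA
          by_cases h1 : θ ≤ V₁ σ
          · have h2 : V₂ σ < θ := hA h1
            apply Finset.mem_union_right
            rw [hBaddef, Finset.mem_filter]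
            exact ⟨Finset.mem_univ σ,
              lt_of_le_of_lt (hfilter_le T₁ σ false hT₁sub) h2,
              lt_of_le_of_lt (hfilter_le T₂ σ false hT₂sub) h2⟩
          · have h2 : V₁ σ < θ := lt_of_not_ge h1
            apply Finset.mem_union_left
            apply Finset.mem_union_right
            rw [hBaddef, Finset.mem_filter]
            exact ⟨Finset.mem_univ σ,
              lt_of_le_of_lt (hfilter_le T₁ σ true hT₁sub) h2,
              lt_of_le_of_lt (hfilter_le T₂ σ true hT₂sub) h2⟩
      have hcards : 2 ^ n ≤ A.card + (Bad true).card + (Bad false).card := by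
        calc 2 ^ n = (Finset.univ : Finset (U → Bool)).card := hcardfun.symm
          _ ≤ (A ∪ Bad true ∪ Bad false).card := Finset.card_le_card hcover
          _ ≤ (A ∪ Bad true).card + (Bad false).card := Finset.card_union_le _ _
          _ ≤ A.card + (Bad true).card + (Bad false).card := by
              have := Finset.card_union_le A (Bad true)
              omega
      have hb1 := hBadcard true
      have hb2 := hBadcard false
      generalize hm : 2 ^ n = m at hcards hb1 hb2 ⊢
      omega
  -- Step 2: A.card ≤ 2 * G.card : flipping the whole partition
  have hstep2 : A.card ≤ 2 * G.card := by
    have hswap : ∀ σ : U → Bool,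
        V₁ (fun e => !σ e) = V₂ σ ∧ V₂ (fun e => !σ e) = V₁ σ := by
      intro σ
      constructor
      · show knapOpt v c B hB _ = knapOpt v c B hB _
        congr 1
        apply Finset.filter_congr
        intro e _
        simp
      · show knapOpt v c B hB _ = knapOpt v c B hB _
        congr 1
        apply Finset.filter_congr
        intro e _
        simp
    have hsd : (A \ G).card ≤ (A ∩ G).card := by
      apply Finset.card_le_card_of_injOn (fun σ => fun e => !σ e)
      · intro σ hσ
        simp only [Finset.mem_coe] at hσ ⊢
        rw [Finset.mem_sdiff] at hσ
        obtain ⟨hσA, hσG⟩ := hσ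
        rw [hmemA] at hσA
        rw [hGmem] at hσG
        push_neg at hσG
        have hlt : V₂ σ < V₁ σ := by
          by_contra h
          push_neg at h
          have hhalf : OPT / 2 ≤ V₂ σ := by
            have := hOPT_le σ
            linarith
          exact absurd hσA.1 (not_le.mpr (hσG hhalf h))
        obtain ⟨h1, h2⟩ := hswap σ
        rw [Finset.mem_inter, hmemA (fun e => !σ e), hGmem (fun e => !σ e), h1, h2]
        refine ⟨⟨hσA.2, hσA.1⟩, ?_, le_of_lt hlt, hσA.2⟩
        have := hOPT_le σ
        linarith
      · intro σ _ σ' _ h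
        funext e
        have he := congrFun h e
        simp only at he
        exact Bool.not_inj he
    have hsplit : (A ∩ G).card + (A \ G).card = A.card :=
      Finset.card_inter_add_card_sdiff A G
    have hAG : (A ∩ G).card ≤ G.card := Finset.card_le_card Finset.inter_subset_right
    omega
  -- conclude
  have hkey : 2 ^ n ≤ 4 * G.card := by
    calc 2 ^ n ≤ 2 * A.card := hstep1
      _ ≤ 2 * (2 * G.card) := Nat.mul_le_mul_left 2 hstep2
      _ = 4 * G.card := by ring
  rw [div_le_div_iff₀ (by norm_num) (by positivity)]
  have hR : ((2:ℝ)) ^ n ≤ 4 * (G.card : ℝ) := by exact_mod_cast hkey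
  push_cast
  linarith
end

section
/- Let S* be a finite set, v a valuation with S ↦ v(S*) − v(S* \ S) superadditive bound as below, q : S* → ℝ≥0 feasible for the constraints q(S) ≤ v(S*) − v(S* \ S) for all S ⊆ S*, and c : S* → ℝ≥0 such that (V₁/(2B))·c(S) ≤ v(S*) − v(S* \ S) for all S ⊆ S* where V₁, B > 0. Suppose moreover q is optimal, i.e., q(S*) ≥ q'(S*) for every feasible q'. Define A = {e ∈ S* : c_e ≤ q_e · 4B/V₁}. Then q(A) ≥ (V₁/(4B))·c(S*). -/
theorem stmt_12 {U : Type*} [DecidableEq U] (v : Finset U → ℝ)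
    (Sstar : Finset U) (B V₁ : ℝ) (hB : 0 < B) (hV₁ : 0 < V₁)
    (q : U → ℝ) (hq0 : ∀ e, 0 ≤ q e)
    (hqfeas : ∀ S ⊆ Sstar, ∑ e ∈ S, q e ≤ v Sstar - v (Sstar \ S))
    (c : U → ℝ) (hc0 : ∀ e, 0 ≤ c e)
    (hcfeas : ∀ S ⊆ Sstar,
      V₁ / (2 * B) * ∑ e ∈ S, c e ≤ v Sstar - v (Sstar \ S))
    (hqopt : ∀ q' : U → ℝ, (∀ e, 0 ≤ q' e) →
      (∀ S ⊆ Sstar, ∑ e ∈ S, q' e ≤ v Sstar - v (Sstar \ S)) →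
      ∑ e ∈ Sstar, q' e ≤ ∑ e ∈ Sstar, q e) :
    V₁ / (4 * B) * ∑ e ∈ Sstar, c e ≤
      ∑ e ∈ Sstar.filter (fun e => c e ≤ q e * (4 * B / V₁)), q e := by
  have hB4 : 0 < 4 * B := by linarith
  have hB2 : 0 < 2 * B := by linarith
  have hpos2 : 0 ≤ V₁ / (2 * B) := le_of_lt (div_pos hV₁ hB2)
  have hpos4 : 0 < V₁ / (4 * B) := div_pos hV₁ hB4
  -- optimality against q' = (V₁/(2B)) c
  have hopt := hqopt (fun e => V₁ / (2 * B) * c e)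
    (fun e => mul_nonneg hpos2 (hc0 e))
    (by
      intro S hS
      have := hcfeas S hS
      simpa [Finset.mul_sum] using this)
  have hlow : V₁ / (2 * B) * ∑ e ∈ Sstar, c e ≤ ∑ e ∈ Sstar, q e := by
    simpa [Finset.mul_sum] using hopt
  set A := Sstar.filter (fun e => c e ≤ q e * (4 * B / V₁)) with hA
  have hsplit : ∑ e ∈ Sstar, q e = ∑ e ∈ A, q e + ∑ e ∈ Sstar \ A, q e := by
    rw [Finset.sum_sdiff_eq_sub (Finset.filter_subset _ _)]
    ring
  -- on the complement, q e ≤ V₁/(4B) * c e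
  have hcomp : ∑ e ∈ Sstar \ A, q e ≤ V₁ / (4 * B) * ∑ e ∈ Sstar \ A, c e := by
    rw [Finset.mul_sum]
    apply Finset.sum_le_sum
    intro e he
    rw [Finset.mem_sdiff, hA, Finset.mem_filter] at he
    have hne : ¬ c e ≤ q e * (4 * B / V₁) := fun h => he.2 ⟨he.1, h⟩
    push_neg at hne
    have h4V : 0 < 4 * B / V₁ := div_pos hB4 hV₁
    have : q e ≤ c e / (4 * B / V₁) := by
      rw [le_div_iff₀ h4V]; linarith
    calc q e ≤ c e / (4 * B / V₁) := this
      _ = V₁ / (4 * B) * c e := by field_simp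
  have hcsub : ∑ e ∈ Sstar \ A, c e ≤ ∑ e ∈ Sstar, c e :=
    Finset.sum_le_sum_of_subset_of_nonneg (Finset.sdiff_subset) (fun e _ _ => hc0 e)
  have h24 : V₁ / (2 * B) * ∑ e ∈ Sstar, c e
      = V₁ / (4 * B) * ∑ e ∈ Sstar, c e + V₁ / (4 * B) * ∑ e ∈ Sstar, c e := by
    field_simp; ring
  have := mul_le_mul_of_nonneg_left hcsub (le_of_lt hpos4)
  linarith
end

section
/- Let U be a finite set, v : 2^U → ℝ monotone subadditive with v(∅)=0, and let A ⊆ S* ⊆ U. Let q : S* → ℝ≥0 with q(S) ≤ v(S*) − v(S*\S) for all S ⊆ S*, and fix a threshold Q > 0. Order A arbitrarily as e₁, …, e_m and let R' = {e₁,…,e_j} be the maximal prefix with q(R') ≤ Q. Then either R' = A (so q(R') = q(A) and v(R') ≥ q(A)), or q(R') + q_{e_{j+1}} > Q, which implies v(R') ≥ q(R') > Q − max_{e} q_e ≥ Q − max_e v({e}). -/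
theorem stmt_18 {U : Type*} [DecidableEq U] (v : Finset U → ℝ)
    (hsub : ∀ A C : Finset U, v (A ∪ C) ≤ v A + v C)
    (hmono : ∀ A C : Finset U, A ⊆ C → v A ≤ v C)
    (hnorm : v ∅ = 0)
    (Sstar : Finset U) (hSne : Sstar.Nonempty)
    (A : Finset U) (hA : A ⊆ Sstar)
    (q : U → ℝ) (hq0 : ∀ e, 0 ≤ q e)
    (hqfeas : ∀ S ⊆ Sstar, ∑ e ∈ S, q e ≤ v Sstar - v (Sstar \ S))
    (Q : ℝ) (hQ : 0 < Q)
    (R' : Finset U) (hR'A : R' ⊆ A) (hR'Q : ∑ e ∈ R', q e ≤ Q)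
    (hmax : R' = A ∨ ∃ e ∈ A, e ∉ R' ∧ Q < (∑ e' ∈ R', q e') + q e) :
    (R' = A ∧ ∑ e ∈ A, q e ≤ v R') ∨
    ((∑ e ∈ R', q e ≤ v R') ∧
      Q - Sstar.sup' hSne (fun e => v {e}) < ∑ e ∈ R', q e) := by
  have key : ∀ S ⊆ Sstar, ∑ e ∈ S, q e ≤ v S := by
    intro S hS
    have h1 := hqfeas S hS
    have h2 : v Sstar ≤ v (Sstar \ S) + v S := by
      have := hsub (Sstar \ S) S
      have hcov : Sstar ⊆ Sstar \ S ∪ S := by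
        intro x hx
        by_cases hxS : x ∈ S
        · exact Finset.mem_union.2 (Or.inr hxS)
        · exact Finset.mem_union.2 (Or.inl (Finset.mem_sdiff.2 ⟨hx, hxS⟩))
      exact le_trans (hmono _ _ hcov) this
    linarith
  have hR'S : R' ⊆ Sstar := hR'A.trans hA
  have hv : ∑ e ∈ R', q e ≤ v R' := key R' hR'S
  rcases hmax with h | ⟨e, heA, heR, hlt⟩
  · left; exact ⟨h, h ▸ hv⟩
  · right
    refine ⟨hv, ?_⟩
    have heS : e ∈ Sstar := hA heA
    have hqe : q e ≤ v {e} := by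
      have h1 := hqfeas {e} (Finset.singleton_subset_iff.2 heS)
      simp at h1
      have h2 : v Sstar ≤ v (Sstar \ {e}) + v {e} := by
        have hcov : Sstar ⊆ Sstar \ {e} ∪ {e} := by
          intro x hx
          by_cases hxe : x ∈ ({e} : Finset U)
          · exact Finset.mem_union.2 (Or.inr hxe)
          · exact Finset.mem_union.2 (Or.inl (Finset.mem_sdiff.2 ⟨hx, hxe⟩))
        exact le_trans (hmono _ _ hcov) (hsub _ _)
      linarith
    have hsup : v {e} ≤ Sstar.sup' hSne (fun e => v {e}) :=
      Finset.le_sup' (fun e => v {e}) heS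
    linarith
end
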